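/- arXiv:2106.00295 — 6 statements merged into one kernel-verified Lean document; each statement's English description precedes it below -/
import Mathlib

section
/- Let C ⊆ ℝ^n be a rational polyhedral cone, (v^i)_{i∈ℕ} a sequence of integer vectors in C ∩ ℤ^n, and q* ∈ ℚ^n a rational vector. Then there exist an infinite set I ⊆ ℕ and an index i* ∈ ℕ such that for every i ∈ I: v^i − v^{i*} ∈ C and v^i·q* − ⌊v^i·q*⌋ = v^{i*}·q* − ⌊v^{i*}·q*⌋. -/
/-- The conical hull of a set: all finite nonnegative combinations. -/
def conicalHull {E : Type*} [AddCommMonoid E] [Module ℝ E] (s : Set E) : Set E :=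
  {x | ∃ (k : ℕ) (c : Fin k → ℝ) (v : Fin k → E),
    (∀ i, 0 ≤ c i) ∧ (∀ i, v i ∈ s) ∧ x = ∑ i, c i • v i}

/-! Write an integer point `v ∈ C` as `∑ c_r r` with `c ≥ 0` and split `c_r = ⌊c_r⌋ + {c_r}`:
`v` is an `ℕ`-combination `∑ ⌊c_r⌋ r` of the generators plus a residue that is bounded by
`∑ |r|` and lies in `(1/N)ℤⁿ`, `N` a common denominator of the generators, so only finitely
many residues occur. Likewise `v·q*` lies in `(1/d)ℤ`, so its fractional part takes finitely
many values. Pigeonhole gives infinitely many indices sharing residue and fractional part, and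
Dickson's lemma on the floor vectors `⌊c⌋ ∈ ℕ^R` extracts an increasing chain among them; along
it, `vⁱ - v^{i*} = ∑ (⌊cⁱ_r⌋ - ⌊c^{i*}_r⌋) r` has nonnegative coefficients. -/

section conicalHull

variable {E : Type*} [AddCommMonoid E] [Module ℝ E]

theorem sum_smul_mem_conicalHull {s : Set E} {ι : Type*} [Fintype ι] {c : ι → ℝ} {u : ι → E}
    (hc : ∀ i, 0 ≤ c i) (hu : ∀ i, u i ∈ s) : ∑ i, c i • u i ∈ conicalHull s := by
  let e := Fintype.equivFin ι
  exact ⟨Fintype.card ι, c ∘ e.symm, u ∘ e.symm, fun i => hc _, fun i => hu _,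
    (e.symm.sum_comp fun i => c i • u i).symm⟩

theorem mem_conicalHull_finset_iff {R : Finset E} {x : E} :
    x ∈ conicalHull (R : Set E) ↔ ∃ c : R → ℝ, (∀ r, 0 ≤ c r) ∧ x = ∑ r, c r • (r : E) := by
  classical
  constructor
  · rintro ⟨k, c, u, hc, hu, rfl⟩
    let g : Fin k → R := fun i => ⟨u i, hu i⟩
    refine ⟨fun r => ∑ i with g i = r, c i, fun r => Finset.sum_nonneg fun i _ => hc i, ?_⟩
    rw [← Finset.sum_fiberwise Finset.univ g]
    refine Finset.sum_congr rfl fun r _ => ?_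
    rw [Finset.sum_smul]
    exact Finset.sum_congr rfl fun i hi => by rw [← (Finset.mem_filter.1 hi).2]
  · rintro ⟨c, hc, rfl⟩
    exact sum_smul_mem_conicalHull hc fun r => r.2

end conicalHull

theorem sub_mem_conicalHull_of_sub_sum_eq {E : Type*} [AddCommGroup E] [Module ℝ E]
    {s : Set E} {ι : Type*} [Fintype ι] {u : ι → E} (hu : ∀ i, u i ∈ s) {a b : ι → ℕ}
    (hab : a ≤ b) {x y : E} (h : x - ∑ i, (a i : ℝ) • u i = y - ∑ i, (b i : ℝ) • u i) :
    y - x ∈ conicalHull s := by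
  have hyx : y - x = ∑ i, ((b i : ℝ) - a i) • u i := by
    simp only [sub_smul, Finset.sum_sub_distrib]
    rw [sub_eq_sub_iff_sub_eq_sub.1 h.symm]
  rw [hyx]
  exact sum_smul_mem_conicalHull (fun i => sub_nonneg.2 (Nat.cast_le.2 (hab i))) hu

theorem exists_infinite_eq_and_le {α β : Type*} [Preorder β] [WellQuasiOrderedLE β]
    (f : ℕ → α) (g : ℕ → β) (hf : (Set.range f).Finite) :
    ∃ (I : Set ℕ) (i₀ : ℕ), I.Infinite ∧ ∀ i ∈ I, f i = f i₀ ∧ g i₀ ≤ g i := by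
  obtain ⟨a, hfiber⟩ : ∃ a, (f ⁻¹' {a}).Infinite := by
    by_contra! hfin
    refine Set.infinite_univ ((hf.biUnion fun a _ => hfin a).subset fun i _ => ?_)
    exact Set.mem_biUnion (Set.mem_range_self i) rfl
  let e := hfiber.natEmbedding
  obtain ⟨φ, hφ⟩ := wellQuasiOrdered_le.exists_monotone_subseq fun k => g (e k)
  refine ⟨Set.range fun k => (e (φ k) : ℕ), e (φ 0), ?_, ?_⟩
  · exact Set.infinite_range_of_injective
      (Subtype.val_injective.comp (e.injective.comp φ.injective))
  · rintro _ ⟨k, rfl⟩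
    exact ⟨(e (φ k)).2.trans (e (φ 0)).2.symm, hφ 0 k k.zero_le⟩

theorem exists_common_denominator {K : Type*} [Field K] [CharZero K] {ι : Type*} [Fintype ι]
    {x : ι → K} (hx : ∀ i, ∃ q : ℚ, x i = q) :
    ∃ N : ℕ, 0 < N ∧ ∀ i, ∃ k : ℤ, (N : K) * x i = k := by
  choose q hq using hx
  refine ⟨∏ i, (q i).den, Finset.prod_pos fun i _ => (q i).pos, fun i => ?_⟩
  obtain ⟨t, ht⟩ := Finset.dvd_prod_of_mem (fun i => (q i).den) (Finset.mem_univ i)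
  have hnum : ((q i).num : K) = (q i : K) * (q i).den := by
    exact_mod_cast (Rat.mul_den_eq_num (q i)).symm
  refine ⟨t * (q i).num, ?_⟩
  rw [ht, hq i]
  push_cast
  rw [hnum]
  ring

section FloorRing

variable {K : Type*} [Field K] [LinearOrder K] [IsStrictOrderedRing K] [FloorRing K]

theorem finite_setOf_abs_le_and_natCast_mul_eq_intCast (B : K) {N : ℕ} (hN : 0 < N) :
    {y : K | |y| ≤ B ∧ ∃ k : ℤ, (N : K) * y = k}.Finite := by
  refine ((Set.finite_Icc (-⌈N * B⌉) ⌈N * B⌉).image fun k : ℤ => (k : K) / N).subset ?_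
  rintro y ⟨hy, k, hk⟩
  have hN' : (0 : K) < N := Nat.cast_pos.2 hN
  refine ⟨k, abs_le.1 ?_, ?_⟩
  · have : ((|k| : ℤ) : K) ≤ N * B := by
      rw [Int.cast_abs, ← hk, abs_mul, Nat.abs_cast]
      gcongr
    exact_mod_cast this.trans (Int.le_ceil _)
  · exact (div_eq_iff hN'.ne').2 (by rw [← hk, mul_comm])

theorem abs_sum_sub_natFloor_mul_le {ι : Type*} [Fintype ι] {c : ι → K} (hc : ∀ i, 0 ≤ c i)
    (b : ι → K) : |∑ i, (c i - ⌊c i⌋₊) * b i| ≤ ∑ i, |b i| := by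
  refine (Finset.abs_sum_le_sum_abs _ _).trans (Finset.sum_le_sum fun i _ => ?_)
  have h : |c i - ⌊c i⌋₊| ≤ 1 := by
    rw [abs_le]
    constructor <;> linarith [Nat.floor_le (hc i), Nat.lt_floor_add_one (c i)]
  rw [abs_mul]
  exact mul_le_of_le_one_left (abs_nonneg _) h

end FloorRing

theorem finite_range_fract_sum_intCast_mul {ι : Type*} [Fintype ι] (q : ι → ℚ) :
    (Set.range fun x : ι → ℤ => Int.fract (∑ j, (x j : ℚ) * q j)).Finite := by
  obtain ⟨d, hd, hqd⟩ := exists_common_denominator (x := q) fun j => ⟨q j, (Rat.cast_id _).symm⟩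
  choose k hk using hqd
  refine (finite_setOf_abs_le_and_natCast_mul_eq_intCast 1 hd).subset ?_
  rintro _ ⟨x, rfl⟩
  refine ⟨?_, ∑ j, x j * k j - d * ⌊∑ j, (x j : ℚ) * q j⌋, ?_⟩
  · rw [abs_of_nonneg (Int.fract_nonneg _)]
    exact (Int.fract_lt_one _).le
  · dsimp only
    rw [← Int.self_sub_floor, mul_sub, Finset.mul_sum]
    simp_rw [mul_left_comm (d : ℚ), hk]
    push_cast
    rfl

theorem exists_finite_set_sub_sum_natFloor_smul_mem {ι : Type*} [Fintype ι]
    (R : Finset (ι → ℝ)) (hR : ∀ r ∈ R, ∀ j, ∃ q : ℚ, r j = q) :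
    ∃ S : Set (ι → ℝ), S.Finite ∧ ∀ (x : ι → ℤ) (c : R → ℝ), (∀ r, 0 ≤ c r) →
      (fun j => (x j : ℝ)) = ∑ r, c r • (r : ι → ℝ) →
      (fun j => (x j : ℝ)) - ∑ r, (⌊c r⌋₊ : ℝ) • (r : ι → ℝ) ∈ S := by
  obtain ⟨N, hN, hRN⟩ := exists_common_denominator (x := fun p : R × ι => (p.1 : ι → ℝ) p.2)
    fun p => hR _ p.1.2 p.2
  choose w hw using hRN
  refine ⟨Set.univ.pi fun j => {y | |y| ≤ ∑ r : R, |(r : ι → ℝ) j| ∧ ∃ k : ℤ, (N : ℝ) * y = k},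
    Set.Finite.pi fun j => finite_setOf_abs_le_and_natCast_mul_eq_intCast _ hN, ?_⟩
  intro x c hc hx j _
  have hres : ((fun j => (x j : ℝ)) - ∑ r, (⌊c r⌋₊ : ℝ) • (r : ι → ℝ)) j
      = ∑ r, (c r - ⌊c r⌋₊) * (r : ι → ℝ) j := by
    nth_rw 1 [hx]
    simp [Finset.sum_apply, sub_mul, Finset.sum_sub_distrib]
  refine ⟨hres ▸ abs_sum_sub_natFloor_mul_le hc _, N * x j - ∑ r, ⌊c r⌋₊ * w (r, j), ?_⟩
  simp [Finset.sum_apply, mul_sub, Finset.mul_sum, mul_left_comm (N : ℝ), ← hw]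

/-- Given a rational polyhedral cone `C`, a sequence of integer vectors in
`C ∩ ℤⁿ` and a rational vector `q*`, there are an infinite set `I` and an
index `i*` such that for all `i ∈ I`, `vⁱ - v^{i*} ∈ C` and the fractional
parts of `vⁱ·q*` and `v^{i*}·q*` agree. -/
theorem infinite_chain_in_rational_cone (n : ℕ) (C : Set (Fin n → ℝ))
    (R : Finset (Fin n → ℝ)) (hR : ∀ r ∈ R, ∀ j, ∃ q : ℚ, r j = (q : ℝ))
    (hC : C = conicalHull (R : Set (Fin n → ℝ)))
    (v : ℕ → Fin n → ℤ) (hv : ∀ i, (fun j => ((v i j : ℝ))) ∈ C)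
    (qstar : Fin n → ℚ) :
    ∃ (I : Set ℕ) (istar : ℕ), I.Infinite ∧
      ∀ i ∈ I, ((fun j => ((v i j - v istar j : ℤ) : ℝ)) ∈ C) ∧
        Int.fract (∑ j, (v i j : ℚ) * qstar j)
          = Int.fract (∑ j, (v istar j : ℚ) * qstar j) := by
  subst hC
  obtain ⟨S, hS, hresidue⟩ := exists_finite_set_sub_sum_natFloor_smul_mem R hR
  choose c hc hvc using fun i => mem_conicalHull_finset_iff.1 (hv i)
  let m : ℕ → R → ℕ := fun i r => ⌊c i r⌋₊
  let residue : ℕ → Fin n → ℝ := fun i =>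
    (fun j => (v i j : ℝ)) - ∑ r, (m i r : ℝ) • (r : Fin n → ℝ)
  let fract : ℕ → ℚ := fun i => Int.fract (∑ j, (v i j : ℚ) * qstar j)
  have hfin : (Set.range fun i => (residue i, fract i)).Finite :=
    (hS.prod (finite_range_fract_sum_intCast_mul qstar)).subset <| Set.range_subset_iff.2
      fun i => ⟨hresidue (v i) (c i) (hc i) (hvc i), Set.mem_range_self (v i)⟩
  obtain ⟨I, i₀, hI, hchain⟩ := exists_infinite_eq_and_le _ m hfin
  refine ⟨I, i₀, hI, fun i hi => ?_⟩
  obtain ⟨heq, hle⟩ := hchain i hi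
  refine ⟨?_, congrArg Prod.snd heq⟩
  convert sub_mem_conicalHull_of_sub_sum_eq (fun r : R => r.2) hle (congrArg Prod.fst heq).symm
    using 1
  ext j
  simp
end

section
/- Gordan's lemma: Given a rational polyhedral cone C ⊆ ℝ^n, there exist finitely many lattice points g^1, …, g^m ∈ C ∩ ℤ^n such that every x ∈ C ∩ ℤ^n can be written as x = Σ_{j=1}^m λ_j g^j with λ_j ∈ ℕ for all j. -/
open Set PointedCone Topology

theorem conicalHull_eq_hull {E : Type*} [AddCommMonoid E] [Module ℝ E] (s : Set E) :
    conicalHull s = hull ℝ s := by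
  ext x
  rw [SetLike.mem_coe, Submodule.mem_span_set']
  constructor
  · rintro ⟨k, c, v, hc, hv, rfl⟩
    exact ⟨k, fun i => ⟨c i, hc i⟩, fun i => ⟨v i, hv i⟩, rfl⟩
  · rintro ⟨k, c, v, rfl⟩
    exact ⟨k, fun i => c i, fun i => v i, fun i => (c i).2, fun i => (v i).2, rfl⟩

theorem hull_range_smul_of_pos {𝕜 E κ : Type*} [Field 𝕜] [LinearOrder 𝕜] [IsStrictOrderedRing 𝕜]
    [AddCommMonoid E] [Module 𝕜 E] (a : κ → 𝕜) (ha : ∀ i, 0 < a i) (v : κ → E) :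
    hull 𝕜 (range fun i => a i • v i) = hull 𝕜 (range v) := by
  apply le_antisymm <;> rw [Submodule.span_le] <;> rintro _ ⟨i, rfl⟩
  · exact (smul_mem_iff _ (ha i)).2 (subset_hull (mem_range_self i))
  · exact (smul_mem_iff _ (ha i)).1 (subset_hull (mem_range_self (f := fun i => a i • v i) i))

def intCastVec (ι : Type*) : (ι → ℤ) →+ (ι → ℝ) := (Int.castAddHom ℝ).compLeft ι

@[simp]
theorem intCastVec_apply {ι : Type*} (z : ι → ℤ) (k : ι) : intCastVec ι z k = z k := rfl

def zonotope {E κ : Type*} [AddCommMonoid E] [Module ℝ E] [Fintype κ] (w : κ → E) : Set E :=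
  (fun t : κ → ℝ => ∑ i, t i • w i) '' Icc 0 1

theorem isCompact_zonotope {E κ : Type*} [AddCommMonoid E] [Module ℝ E] [TopologicalSpace E]
    [ContinuousAdd E] [ContinuousSMul ℝ E] [Fintype κ] (w : κ → E) :
    IsCompact (zonotope w) :=
  isCompact_Icc.image (by fun_prop)

theorem zonotope_subset_hull {E κ : Type*} [AddCommMonoid E] [Module ℝ E] [Fintype κ]
    (w : κ → E) : zonotope w ⊆ hull ℝ (range w) := by
  rintro _ ⟨t, ht, rfl⟩
  exact Submodule.sum_mem _ fun i _ => smul_mem _ (ht.1 i) (subset_hull (mem_range_self i))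

theorem mem_zonotope_self {E κ : Type*} [AddCommMonoid E] [Module ℝ E] [Fintype κ]
    [DecidableEq κ] (w : κ → E) (i : κ) : w i ∈ zonotope w :=
  ⟨Pi.single i 1, ⟨by simp, fun j => by rcases eq_or_ne j i with rfl | h <;> simp [*]⟩, by
    simp [Pi.single_apply]⟩

section Lattice

variable {ι κ : Type*} [Fintype κ]

def latticeZonotope (v : κ → ι → ℤ) : Set (ι → ℤ) :=
  intCastVec ι ⁻¹' zonotope (intCastVec ι ∘ v)

theorem finite_latticeZonotope [Finite ι] (v : κ → ι → ℤ) : (latticeZonotope v).Finite :=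
  ((IsClosedEmbedding.piMap fun _ => Real.isClosedEmbedding_intCast).isCompact_preimage
    (isCompact_zonotope _)).finite_of_discrete

theorem intCastVec_mem_hull_of_mem_latticeZonotope {v : κ → ι → ℤ} {z : ι → ℤ}
    (hz : z ∈ latticeZonotope v) : intCastVec ι z ∈ hull ℝ (range (intCastVec ι ∘ v)) :=
  zonotope_subset_hull _ hz

theorem mem_closure_latticeZonotope {v : κ → ι → ℤ} {x : ι → ℤ}
    (hx : intCastVec ι x ∈ hull ℝ (range (intCastVec ι ∘ v))) :
    x ∈ AddSubmonoid.closure (latticeZonotope v) := by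
  classical
  obtain ⟨c, hc⟩ := (Submodule.mem_span_range_iff_exists_fun _).1 hx
  simp only [← Nonneg.coe_smul] at hc
  set N : κ → ℕ := fun i => ⌊(c i : ℝ)⌋₊
  have hfract : x - ∑ i, N i • v i ∈ latticeZonotope v := by
    refine ⟨fun i => c i - N i, ⟨fun i => sub_nonneg.2 (Nat.floor_le (c i).2), fun i => ?_⟩, ?_⟩
    · exact sub_le_iff_le_add'.2 (Nat.lt_floor_add_one (c i : ℝ)).le
    · simp only [map_sub, map_sum, map_nsmul, ← hc, Function.comp_apply, sub_smul,
        Finset.sum_sub_distrib, Nat.cast_smul_eq_nsmul]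
  have hgen (i : κ) : v i ∈ latticeZonotope v := mem_zonotope_self (intCastVec ι ∘ v) i
  rw [← sub_add_cancel x (∑ i, N i • v i)]
  exact add_mem (AddSubmonoid.subset_closure hfract)
    (sum_mem fun i _ => nsmul_mem (AddSubmonoid.subset_closure (hgen i)) _)

end Lattice

theorem Rat.exists_pos_nat_mul_eq_intCast {ι : Type*} [Fintype ι] (q : ι → ℚ) :
    ∃ d : ℕ, 0 < d ∧ ∃ z : ι → ℤ, ∀ j, (z j : ℚ) = d * q j := by
  refine ⟨∏ j, (q j).den, Finset.prod_pos fun j _ => (q j).pos, ?_⟩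
  have hdvd (j : ι) : (q j).den ∣ ∏ j, (q j).den := Finset.dvd_prod_of_mem _ (Finset.mem_univ j)
  choose m hm using hdvd
  refine ⟨fun j => (q j).num * m j, fun j => ?_⟩
  rw [hm j]
  push_cast
  rw [← Rat.mul_den_eq_num]
  ring

theorem exists_intCastVec_eq_nat_smul {ι : Type*} [Fintype ι] {r : ι → ℝ}
    (hr : ∀ j, ∃ q : ℚ, r j = q) : ∃ d : ℕ, 0 < d ∧ ∃ z : ι → ℤ, intCastVec ι z = (d : ℝ) • r := by
  choose q hq using hr
  obtain ⟨d, hd, z, hz⟩ := Rat.exists_pos_nat_mul_eq_intCast q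
  refine ⟨d, hd, z, funext fun j => ?_⟩
  simp only [intCastVec_apply, Pi.smul_apply, smul_eq_mul, hq]
  exact_mod_cast hz j

theorem exists_int_hull_eq {ι κ : Type*} [Fintype ι] (u : κ → ι → ℝ)
    (hu : ∀ i j, ∃ q : ℚ, u i j = q) :
    ∃ v : κ → ι → ℤ, hull ℝ (range (intCastVec ι ∘ v)) = hull ℝ (range u) := by
  choose d hd v hv using fun i => exists_intCastVec_eq_nat_smul (hu i)
  refine ⟨v, ?_⟩
  rw [← hull_range_smul_of_pos (fun i => (d i : ℝ)) (fun i => Nat.cast_pos.2 (hd i)) u]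
  exact congrArg _ (congrArg range (funext hv))

/-- Gordan's lemma: a rational polyhedral cone `C ⊆ ℝⁿ` admits finitely many
lattice points `g¹, …, gᵐ ∈ C ∩ ℤⁿ` such that every lattice point of `C` is an
integer conical (ℕ-)combination of them. -/
theorem gordan_hilbert_basis (n : ℕ) (C : Set (Fin n → ℝ))
    (R : Finset (Fin n → ℝ)) (hR : ∀ r ∈ R, ∀ j, ∃ q : ℚ, r j = (q : ℝ))
    (hC : C = conicalHull (R : Set (Fin n → ℝ))) :
    ∃ (m : ℕ) (g : Fin m → Fin n → ℤ),
      (∀ j, (fun k => ((g j k : ℝ))) ∈ C) ∧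
      ∀ x : Fin n → ℤ, (fun k => ((x k : ℝ))) ∈ C →
        ∃ lam : Fin m → ℕ, ∀ k, x k = ∑ j, (lam j : ℤ) * g j k := by
  obtain ⟨v, hv⟩ := exists_int_hull_eq (Subtype.val : R → Fin n → ℝ) fun r => hR r r.2
  rw [Subtype.range_coe] at hv
  replace hC : C = hull ℝ (range (intCastVec _ ∘ v)) := by rw [hC, conicalHull_eq_hull, hv]
  subst hC
  obtain ⟨m, g, -, hg⟩ := (finite_latticeZonotope v).fin_param
  refine ⟨m, g, fun j => ?_, fun x hx => ?_⟩
  · exact intCastVec_mem_hull_of_mem_latticeZonotope (hg ▸ mem_range_self j)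
  · obtain ⟨lam, hlam⟩ := AddSubmonoid.mem_closure_range_iff_of_fintype.1
      (hg ▸ mem_closure_latticeZonotope hx)
    exact ⟨lam, fun k => by simp [hlam, Finset.sum_apply]⟩
end

section
/- Extended Farkas lemma: the inequality a·x ≥ b is a consequence of a consistent (i.e., feasible) system {a_t·x ≥ b_t : t ∈ T} if and only if (a, b) lies in the closed conical hull of {(a_t, b_t) : t ∈ T} ∪ {(0,…,0,−1)} in ℝ^{n+1}. -/
lemma zero_mem_conicalHull {E : Type*} [AddCommMonoid E] [Module ℝ E] (s : Set E) :
    (0 : E) ∈ conicalHull s :=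
  ⟨0, fun _ => 0, fun i => i.elim0, fun i => le_refl _, fun i => i.elim0, by simp⟩

lemma mem_conicalHull_self {E : Type*} [AddCommMonoid E] [Module ℝ E] {s : Set E} {x : E}
    (hx : x ∈ s) : x ∈ conicalHull s :=
  ⟨1, fun _ => 1, fun _ => x, fun _ => zero_le_one, fun _ => hx, by simp⟩

lemma smul_mem_conicalHull {E : Type*} [AddCommMonoid E] [Module ℝ E] {s : Set E} {x : E} {r : ℝ}
    (hr : 0 ≤ r) (hx : x ∈ conicalHull s) : r • x ∈ conicalHull s := by
  obtain ⟨k, c, v, hc, hv, rfl⟩ := hx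
  exact ⟨k, fun i => r * c i, v, fun i => mul_nonneg hr (hc i), hv, by
    simp [Finset.smul_sum, mul_smul]⟩

lemma add_mem_conicalHull {E : Type*} [AddCommMonoid E] [Module ℝ E] {s : Set E} {x y : E}
    (hx : x ∈ conicalHull s) (hy : y ∈ conicalHull s) : x + y ∈ conicalHull s := by
  obtain ⟨k, c, v, hc, hv, rfl⟩ := hx
  obtain ⟨l, c', v', hc', hv', rfl⟩ := hy
  refine ⟨k + l, Fin.append c c', Fin.append v v', ?_, ?_, ?_⟩
  · intro i
    refine Fin.addCases (fun i => ?_) (fun i => ?_) i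
    · simpa [Fin.append_left] using hc i
    · simpa [Fin.append_right] using hc' i
  · intro i
    refine Fin.addCases (fun i => ?_) (fun i => ?_) i
    · simpa [Fin.append_left] using hv i
    · simpa [Fin.append_right] using hv' i
  · rw [Fin.sum_univ_add]
    simp [Fin.append_left, Fin.append_right]

lemma convex_conicalHull {E : Type*} [AddCommMonoid E] [Module ℝ E] (s : Set E) :
    Convex ℝ (conicalHull s) := fun _ hx _ hy _ _ ha hb _ =>
  add_mem_conicalHull (smul_mem_conicalHull ha hx) (smul_mem_conicalHull hb hy)

/-- Extended Farkas lemma: `a·x ≥ b` is a consequence of the consistent system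
`{aₜ·x ≥ bₜ : t ∈ T}` iff `(a, b)` lies in the closed conical hull of
`{(aₜ, bₜ) : t ∈ T} ∪ {(0, -1)}`. -/
theorem extended_farkas (n : ℕ) (T : Type*) (a : T → Fin n → ℝ) (b : T → ℝ)
    (hcons : ∃ x : Fin n → ℝ, ∀ t, b t ≤ ∑ j, a t j * x j)
    (c : Fin n → ℝ) (d : ℝ) :
    (∀ x : Fin n → ℝ, (∀ t, b t ≤ ∑ j, a t j * x j) → d ≤ ∑ j, c j * x j) ↔
      (c, d) ∈ closure (conicalHull
        ((Set.range fun t => (a t, b t)) ∪ {((0 : Fin n → ℝ), (-1 : ℝ))})) := by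
  set S : Set ((Fin n → ℝ) × ℝ) :=
    (Set.range fun t => (a t, b t)) ∪ {((0 : Fin n → ℝ), (-1 : ℝ))} with hS
  constructor
  · -- hard direction: separation
    intro hcons2
    by_contra hmem
    have hconv : Convex ℝ (closure (conicalHull S)) := (convex_conicalHull S).closure
    obtain ⟨f, u, hfu, hf⟩ :=
      geometric_hahn_banach_point_closed hconv isClosed_closure hmem
    have h0 : (0 : (Fin n → ℝ) × ℝ) ∈ closure (conicalHull S) :=
      subset_closure (zero_mem_conicalHull S)
    have hu0 : u < 0 := by simpa using hf 0 h0
    -- f is nonneg on all elements of S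
    have hfS : ∀ g ∈ S, 0 ≤ f g := by
      intro g hg
      by_contra hneg
      push_neg at hneg
      have hl : (0:ℝ) ≤ (u - 1) / f g := by
        rw [div_nonneg_iff]
        right
        constructor <;> linarith
      have hmemg : ((u - 1) / f g) • g ∈ closure (conicalHull S) :=
        subset_closure (smul_mem_conicalHull hl (mem_conicalHull_self hg))
      have := hf _ hmemg
      rw [map_smul] at this
      have : u < (u - 1) / f g * f g := this
      rw [div_mul_cancel₀] at this
      · linarith
      · exact ne_of_lt hneg
    -- representation of f
    set s₀ : ℝ := f (0, 1) with hs₀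
    set y : Fin n → ℝ := fun j => f ((fun k => if j = k then 1 else 0), 0) with hy
    have hrep : ∀ p : Fin n → ℝ, ∀ q : ℝ, f (p, q) = (∑ j, p j * y j) + q * s₀ := by
      intro p q
      have h1 : (p, q) = (p, (0:ℝ)) + q • ((0:Fin n → ℝ), (1:ℝ)) := by
        simp [Prod.ext_iff]
      have hg : f (p, (0:ℝ)) = ∑ j, p j * y j := by
        have := LinearMap.pi_apply_eq_sum_univ
          ((f.toLinearMap).comp (LinearMap.inl ℝ (Fin n → ℝ) ℝ)) p
        simpa [smul_eq_mul] using this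
      rw [h1, map_add, map_smul, hg, smul_eq_mul, hs₀]
    have hAt : ∀ t, 0 ≤ (∑ j, a t j * y j) + b t * s₀ := by
      intro t
      have := hfS (a t, b t) (Or.inl ⟨t, rfl⟩)
      rwa [hrep] at this
    have hs₀le : s₀ ≤ 0 := by
      have := hfS ((0 : Fin n → ℝ), (-1:ℝ)) (Or.inr rfl)
      rw [hrep] at this
      simp at this
      linarith
    have hcd : (∑ j, c j * y j) + d * s₀ < 0 := by
      have := hrep c d
      linarith [hfu, hu0, this ▸ hfu]
    rcases lt_or_eq_of_le hs₀le with hs | hs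
    · -- s₀ < 0 : scale y to get feasible point violating the consequence
      set z : Fin n → ℝ := fun j => y j / (-s₀) with hz
      have hzfeas : ∀ t, b t ≤ ∑ j, a t j * z j := by
        intro t
        have hsum : ∑ j, a t j * z j = (∑ j, a t j * y j) / (-s₀) := by
          rw [Finset.sum_div]
          exact Finset.sum_congr rfl fun j _ => by rw [hz]; ring
        rw [hsum, le_div_iff₀ (by linarith)]
        have := hAt t
        nlinarith
      have hle := hcons2 z hzfeas
      have hsum : ∑ j, c j * z j = (∑ j, c j * y j) / (-s₀) := by
        rw [Finset.sum_div]
        exact Finset.sum_congr rfl fun j _ => by rw [hz]; ring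
      rw [hsum, le_div_iff₀ (by linarith)] at hle
      nlinarith
    · -- s₀ = 0 : push a feasible point to infinity along y
      rw [hs] at hAt hcd
      simp at hAt hcd
      obtain ⟨x₀, hx₀⟩ := hcons
      set Sy : ℝ := ∑ j, c j * y j with hSy
      set lam : ℝ := max 0 ((∑ j, c j * x₀ j - d + 1) / (-Sy)) with hlam
      have hlam0 : 0 ≤ lam := le_max_left _ _
      have hfeas : ∀ t, b t ≤ ∑ j, a t j * (x₀ j + lam * y j) := by
        intro t
        have hexp : ∑ j, a t j * (x₀ j + lam * y j)
            = (∑ j, a t j * x₀ j) + lam * ∑ j, a t j * y j := by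
          rw [Finset.mul_sum, ← Finset.sum_add_distrib]
          exact Finset.sum_congr rfl fun j _ => by ring
        rw [hexp]
        have := hAt t
        nlinarith [hx₀ t]
      have hle := hcons2 _ hfeas
      have hexp : ∑ j, c j * (x₀ j + lam * y j)
          = (∑ j, c j * x₀ j) + lam * Sy := by
        rw [hSy, Finset.mul_sum, ← Finset.sum_add_distrib]
        exact Finset.sum_congr rfl fun j _ => by ring
      rw [hexp] at hle
      have hlam2 : (∑ j, c j * x₀ j - d + 1) / (-Sy) ≤ lam := le_max_right _ _
      have : lam * Sy ≤ d - (∑ j, c j * x₀ j) - 1 := by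
        rw [div_le_iff₀ (by linarith : (0:ℝ) < -Sy)] at hlam2
        nlinarith
      linarith
  · -- easy direction
    intro hmem x hx
    set φ : ((Fin n → ℝ) × ℝ) →ₗ[ℝ] ℝ :=
      { toFun := fun p => (∑ j, p.1 j * x j) - p.2
        map_add' := by
          intro p q
          simp [add_mul, Finset.sum_add_distrib]
          ring
        map_smul' := by
          intro r p
          simp [Finset.mul_sum, smul_eq_mul, mul_sub, mul_assoc] } with hφ
    have hφcont : Continuous φ := φ.continuous_of_finiteDimensional
    have hφpos : ∀ p ∈ conicalHull S, 0 ≤ φ p := by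
      rintro p ⟨k, co, v, hco, hv, rfl⟩
      rw [map_sum]
      apply Finset.sum_nonneg
      intro i _
      rw [map_smul]
      refine mul_nonneg (hco i) ?_
      rcases hv i with ⟨t, ht⟩ | h
      · have : φ (v i) = (∑ j, a t j * x j) - b t := by rw [← ht]; rfl
        rw [this]
        linarith [hx t]
      · simp only [Set.mem_singleton_iff] at h
        have : φ (v i) = (∑ j, (0:ℝ) * x j) - (-1) := by rw [h]; rfl
        rw [this]
        simp
    have hclosed : IsClosed {p : (Fin n → ℝ) × ℝ | 0 ≤ φ p} :=
      isClosed_le continuous_const hφcont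
    have hsub : closure (conicalHull S) ⊆ {p | 0 ≤ φ p} :=
      closure_minimal hφpos hclosed
    have := hsub hmem
    have hφcd : φ (c, d) = (∑ j, c j * x j) - d := rfl
    rw [Set.mem_setOf_eq, hφcd] at this
    linarith
end

section
/- Let Ω ⊆ ℝ^{n+1} with (0,…,0,1) ∈ Ω and 0 ∉ Ω, and suppose cl cone(Ω) is pointed. Then for every extreme ray r of cl cone(Ω), either r is a positive multiple of some element of Ω, or there exists a sequence of pairwise non-proportional elements r^i ∈ Ω and positive scalars λ_i with λ_i r^i → r. -/
open Set Filter Topology Module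

def IsExtremeRay {E : Type*} [AddCommMonoid E] [Module ℝ E] (C : Set E) (r : E) : Prop :=
  r ∈ C ∧ r ≠ 0 ∧ ∀ a ∈ C, ∀ b ∈ C, r = a + b →
    (∃ s : ℝ, 0 ≤ s ∧ a = s • r) ∧ (∃ s : ℝ, 0 ≤ s ∧ b = s • r)

theorem PointedCone.coe_hull_eq_conicalHull {E : Type*} [AddCommMonoid E] [Module ℝ E]
    (s : Set E) : (PointedCone.hull ℝ s : Set E) = conicalHull s := by
  ext x
  rw [SetLike.mem_coe, Submodule.mem_span_set']
  constructor
  · rintro ⟨k, c, v, rfl⟩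
    exact ⟨k, fun i => c i, fun i => v i, fun i => (c i).2, fun i => (v i).2, rfl⟩
  · rintro ⟨k, c, v, hc, hv, rfl⟩
    exact ⟨k, fun i => ⟨c i, hc i⟩, fun i => ⟨v i, hv i⟩, rfl⟩

theorem inv_smul_mem_convexHull_of_mem_conicalHull {E : Type*} [AddCommGroup E] [Module ℝ E]
    {Ω : Set E} (f : E →ₗ[ℝ] ℝ) (hfΩ : ∀ ω ∈ Ω, 0 < f ω) {x : E} (hx : x ∈ conicalHull Ω)
    (hfx : 0 < f x) : (f x)⁻¹ • x ∈ convexHull ℝ ((fun ω => (f ω)⁻¹ • ω) '' Ω) := by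
  obtain ⟨k, c, v, hc, hv, rfl⟩ := hx
  have hsum : ∑ i, c i * f (v i) = f (∑ i, c i • v i) := by simp [map_sum]
  have hmem := Finset.centerMass_mem_convexHull Finset.univ (w := fun i => c i * f (v i))
    (z := fun i => (f (v i))⁻¹ • v i) (fun i _ => mul_nonneg (hc i) (hfΩ _ (hv i)).le)
    (hsum ▸ hfx) (fun i _ => mem_image_of_mem (fun ω => (f ω)⁻¹ • ω) (hv i))
  convert hmem using 1
  rw [Finset.centerMass, hsum]
  congr 1
  refine Finset.sum_congr rfl fun i _ => ?_
  rw [smul_smul, mul_assoc, mul_inv_cancel₀ (hfΩ _ (hv i)).ne', mul_one]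

theorem IsExtremeRay.inv_smul_mem_extremePoints {E : Type*} [AddCommGroup E] [Module ℝ E]
    {C : PointedCone ℝ E} {r : E} (hr : IsExtremeRay (C : Set E) r) (f : E →ₗ[ℝ] ℝ)
    (hfr : 0 < f r) : (f r)⁻¹ • r ∈ ({x ∈ C | f x = 1} : Set E).extremePoints ℝ := by
  obtain ⟨hrC, -, hext⟩ := hr
  refine ⟨⟨C.smul_mem (inv_nonneg.2 hfr.le) hrC, by simp [hfr.ne']⟩, ?_⟩
  rintro x₁ ⟨hx₁C, hfx₁⟩ x₂ ⟨hx₂C, -⟩ ⟨a, b, ha, hb, -, he⟩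
  have hr_eq : r = (f r * a) • x₁ + (f r * b) • x₂ := by
    rw [mul_smul, mul_smul, ← smul_add, he, smul_inv_smul₀ hfr.ne']
  obtain ⟨⟨s, -, hs⟩, -⟩ := hext _ (C.smul_mem (by positivity) hx₁C) _
    (C.smul_mem (by positivity) hx₂C) hr_eq
  have hsa : s = a := by
    have := congrArg f hs
    simp only [map_smul, smul_eq_mul, hfx₁, mul_one] at this
    exact (mul_right_cancel₀ hfr.ne' (by linarith)).symm
  calc x₁ = (f r * a)⁻¹ • ((f r * a) • x₁) := (inv_smul_smul₀ (by positivity) x₁).symm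
    _ = (f r)⁻¹ • r := by
      rw [hs, hsa, smul_smul, mul_inv, mul_assoc, inv_mul_cancel₀ ha.ne', mul_one]

variable {E : Type*} [NormedAddCommGroup E] [NormedSpace ℝ E]

theorem isCompact_convexHull [FiniteDimensional ℝ E] {s : Set E} (hs : IsCompact s) :
    IsCompact (convexHull ℝ s) := by
  have hcara : convexHull ℝ s = ⋃ n : Fin (finrank ℝ E + 2),
      (fun p : (Fin n → ℝ) × (Fin n → E) => ∑ i, p.1 i • p.2 i) ''
        (stdSimplex ℝ (Fin n) ×ˢ univ.pi fun _ => s) := by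
    refine Subset.antisymm (fun x hx => ?_) (iUnion_subset fun n => ?_)
    · obtain ⟨ι, _, z, w, hzs, hai, hw0, hw1, rfl⟩ := eq_pos_convex_span_of_mem_convexHull hx
      have hcard : Fintype.card ι < finrank ℝ E + 2 := by
        have := hai.card_le_finrank_succ
        have := Submodule.finrank_le (vectorSpan ℝ (range z))
        omega
      let e := (Fintype.equivFin ι).symm
      refine mem_iUnion.2 ⟨⟨_, hcard⟩, (w ∘ e, z ∘ e), ⟨⟨fun i => (hw0 _).le, ?_⟩,
        fun i _ => hzs (mem_range_self _)⟩, ?_⟩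
      · simpa [Function.comp_def] using (e.sum_comp w).trans hw1
      · exact e.sum_comp (fun i => w i • z i)
    · rintro _ ⟨⟨w, v⟩, ⟨hw, hv⟩, rfl⟩
      exact (convex_convexHull ℝ s).sum_mem (fun i _ => hw.1 i) hw.2
        fun i _ => subset_convexHull ℝ s (hv i trivial)
  rw [hcara]
  exact isCompact_iUnion fun n =>
    ((isCompact_stdSimplex _ _).prod (isCompact_univ_pi fun _ => hs)).image (by fun_prop)

theorem mem_closure_of_mem_extremePoints_of_mem_closure_convexHull [FiniteDimensional ℝ E]
    {A S : Set E} (hA : Bornology.IsBounded A) (hAS : A ⊆ S) (hS : Convex ℝ S) (hSc : IsClosed S)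
    {x : E} (hx : x ∈ S.extremePoints ℝ) (hxA : x ∈ closure (convexHull ℝ A)) :
    x ∈ closure A := by
  have hK : IsCompact (convexHull ℝ (closure A)) := isCompact_convexHull hA.isCompact_closure
  have hxK : x ∈ convexHull ℝ (closure A) :=
    closure_minimal (convexHull_mono subset_closure) hK.isClosed hxA
  exact extremePoints_convexHull_subset <| inter_extremePoints_subset_extremePoints_of_subset
    (convexHull_min (closure_minimal hAS hSc) hS) ⟨hxK, hx⟩

namespace ProperCone

variable (C : ProperCone ℝ E)

theorem exists_dual_pos (hC : (C.toPointedCone : ConvexCone ℝ E).Salient) {x : E} (hx : x ∈ C)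
    (hx0 : x ≠ 0) : ∃ g : StrongDual ℝ E, (∀ y ∈ C, 0 ≤ g y) ∧ 0 < g x := by
  obtain ⟨g, hgC, hgx⟩ := C.hyperplane_separation_point (hC x hx hx0)
  exact ⟨g, hgC, by simpa using hgx⟩

theorem exists_dual_pos_on_isCompact (hC : (C.toPointedCone : ConvexCone ℝ E).Salient)
    {K : Set E} (hK : IsCompact K) (hKC : K ⊆ C) (hK0 : (0 : E) ∉ K) :
    ∃ f : StrongDual ℝ E, (∀ y ∈ C, 0 ≤ f y) ∧ ∀ y ∈ K, 0 < f y := by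
  choose! g hgC hgx using fun x (hx : x ∈ K) =>
    C.exists_dual_pos hC (hKC hx) (ne_of_mem_of_not_mem hx hK0)
  obtain ⟨t, htK, hKt⟩ := hK.elim_nhds_subcover (fun x => {y | 0 < g x y})
    fun x hx => (isOpen_lt continuous_const (g x).continuous).mem_nhds (hgx x hx)
  refine ⟨∑ x ∈ t, g x, fun y hy => ?_, fun y hy => ?_⟩
  · simpa using Finset.sum_nonneg fun x hx => hgC x (htK x hx) y hy
  · obtain ⟨x, hxt, hxy⟩ := mem_iUnion₂.1 (hKt hy)
    simpa using Finset.sum_pos' (fun x hx => hgC x (htK x hx) y (hKC hy)) ⟨x, hxt, hxy⟩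

theorem exists_dual_mul_norm_le [FiniteDimensional ℝ E]
    (hC : (C.toPointedCone : ConvexCone ℝ E).Salient) :
    ∃ f : StrongDual ℝ E, ∃ u > 0, ∀ x ∈ C, u * ‖x‖ ≤ f x := by
  set S := (C : Set E) ∩ Metric.sphere 0 1
  have hS : IsCompact S := (isCompact_sphere 0 1).inter_left C.isClosed
  obtain ⟨f, -, hfS⟩ := C.exists_dual_pos_on_isCompact hC hS inter_subset_left
    fun h => by simpa using h.2
  obtain ⟨u, hu, hfu⟩ := hS.exists_forall_le' f.continuous.continuousOn hfS
  refine ⟨f, u, hu, fun x hx => ?_⟩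
  rcases eq_or_ne x 0 with rfl | hx0
  · simp
  have hnorm : 0 < ‖x‖ := norm_pos_iff.2 hx0
  have hxS : ‖x‖⁻¹ • x ∈ S := ⟨C.smul_mem hx (by positivity), by simp [norm_smul, hx0]⟩
  have := hfu _ hxS
  rw [map_smul, smul_eq_mul] at this
  calc u * ‖x‖ ≤ ‖x‖⁻¹ * f x * ‖x‖ := by gcongr
    _ = f x := by field_simp

end ProperCone

theorem inv_smul_mem_closure_convexHull {Ω : Set E} (f : StrongDual ℝ E)
    (hfΩ : ∀ ω ∈ Ω, 0 < f ω) {r : E} (hr : r ∈ closure (conicalHull Ω)) (hfr : 0 < f r) :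
    (f r)⁻¹ • r ∈ closure (convexHull ℝ ((fun ω => (f ω)⁻¹ • ω) '' Ω)) := by
  obtain ⟨x, hx, hxr⟩ := mem_closure_iff_seq_limit.1 hr
  have hfx : Tendsto (fun k => f (x k)) atTop (𝓝 (f r)) := (f.continuous.tendsto r).comp hxr
  exact mem_closure_of_tendsto ((hfx.inv₀ hfr.ne').smul hxr) <|
    (hfx.eventually (lt_mem_nhds hfr)).mono fun k hk =>
      inv_smul_mem_convexHull_of_mem_conicalHull (f : E →ₗ[ℝ] ℝ) hfΩ (hx k) hk

theorem IsExtremeRay.exists_tendsto_smul [FiniteDimensional ℝ E] {C : ProperCone ℝ E}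
    (hC : (C.toPointedCone : ConvexCone ℝ E).Salient) {Ω : Set E} (hΩC : Ω ⊆ C)
    (hΩ0 : (0 : E) ∉ Ω) {r : E} (hr : IsExtremeRay (C : Set E) r)
    (hrΩ : r ∈ closure (conicalHull Ω)) :
    ∃ (v : ℕ → E) (lam : ℕ → ℝ), (∀ k, v k ∈ Ω) ∧ (∀ k, 0 < lam k) ∧
      Tendsto (fun k => lam k • v k) atTop (𝓝 r) := by
  obtain ⟨f, u, hu, hf⟩ := C.exists_dual_mul_norm_le hC
  have hfpos : ∀ x ∈ C, x ≠ 0 → 0 < f x := fun x hx hx0 =>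
    (mul_pos hu (norm_pos_iff.2 hx0)).trans_le (hf x hx)
  have hfΩ : ∀ ω ∈ Ω, 0 < f ω := fun ω hω => hfpos ω (hΩC hω) (ne_of_mem_of_not_mem hω hΩ0)
  have hfr : 0 < f r := hfpos r hr.1 hr.2.1
  set B := (fun ω => (f ω)⁻¹ • ω) '' Ω
  set S : Set E := {x ∈ C | f x = 1}
  have hBS : B ⊆ S := by
    rintro _ ⟨ω, hω, rfl⟩
    exact ⟨C.smul_mem (hΩC hω) (inv_nonneg.2 (hfΩ ω hω).le), by simp [(hfΩ ω hω).ne']⟩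
  have hB : Bornology.IsBounded B := isBounded_iff_forall_norm_le.2 ⟨u⁻¹, fun x hx => by
    rw [← one_div, le_div_iff₀ hu, mul_comm, ← (hBS hx).2]
    exact hf x (hBS hx).1⟩
  have heB : (f r)⁻¹ • r ∈ closure B :=
    mem_closure_of_mem_extremePoints_of_mem_closure_convexHull hB hBS
      (C.convex.inter (convex_hyperplane f.isLinear 1))
      (C.isClosed.inter (isClosed_eq f.continuous continuous_const))
      (hr.inv_smul_mem_extremePoints (f : E →ₗ[ℝ] ℝ) hfr)
      (inv_smul_mem_closure_convexHull f hfΩ hrΩ hfr)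
  obtain ⟨b, hbB, hb⟩ := mem_closure_iff_seq_limit.1 heB
  choose v hvΩ hvb using hbB
  refine ⟨v, fun k => f r * (f (v k))⁻¹, hvΩ,
    fun k => mul_pos hfr (inv_pos.2 (hfΩ _ (hvΩ k))), ?_⟩
  have hvb' : (fun k => (f r * (f (v k))⁻¹) • v k) = fun k => f r • b k :=
    funext fun k => by rw [← hvb k, smul_smul]
  rw [hvb']
  simpa [smul_inv_smul₀ hfr.ne'] using hb.const_smul (f r)

theorem Filter.extraction_forall_lt_of_eventually {Q : ℕ → ℕ → Prop}
    (h : ∀ i, ∀ᶠ j in atTop, Q i j) : ∃ φ : ℕ → ℕ, StrictMono φ ∧ ∀ i j, i < j → Q (φ i) (φ j) := by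
  choose N hN using fun n => eventually_atTop.1 ((finite_Iic n).eventually_all.2 fun i _ => h i)
  let φ : ℕ → ℕ := fun n => Nat.rec 0 (fun _ m => max (m + 1) (N m)) n
  have hφ : StrictMono φ :=
    strictMono_nat_of_lt_succ fun n => (Nat.lt_succ_self _).trans_le (le_max_left _ _)
  refine ⟨φ, hφ, fun i j hij => ?_⟩
  obtain ⟨k, rfl⟩ : ∃ k, j = k + 1 := ⟨j - 1, by omega⟩
  exact hN (φ k) (φ (k + 1)) (le_max_right _ _) (φ i) (hφ.monotone (Nat.lt_succ_iff.1 hij))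

theorem eventually_forall_pos_smul_ne {v : ℕ → E} {lam : ℕ → ℝ} {r : E} (hlam : ∀ k, 0 ≤ lam k)
    (hlim : Tendsto (fun k => lam k • v k) atTop (𝓝 r)) (hr : r ≠ 0)
    (hrv : ∀ i, ∀ t : ℝ, 0 < t → r ≠ t • v i) (i : ℕ) :
    ∀ᶠ j in atTop, ∀ t : ℝ, 0 < t → v j ≠ t • v i := by
  by_contra hfreq
  have hray : IsClosed ((fun t : ℝ => t • v i) '' Ici 0) :=
    isClosedMap_smul_left (v i) _ isClosed_Ici
  have hfreq' : ∃ᶠ j in atTop, lam j • v j ∈ (fun t : ℝ => t • v i) '' Ici 0 := by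
    refine (not_eventually.1 hfreq).mono fun j hj => ?_
    push Not at hj
    obtain ⟨t, ht, hvj⟩ := hj
    exact ⟨lam j * t, mul_nonneg (hlam j) ht.le, by rw [hvj, smul_smul]⟩
  obtain ⟨s, hs, hrs⟩ := hray.mem_of_frequently_of_tendsto hfreq' hlim
  refine hrv i s (lt_of_le_of_ne hs ?_) hrs.symm
  rintro rfl
  exact hr (by simpa using hrs.symm)

theorem extraction_forall_ne_pos_smul_of_tendsto {v : ℕ → E} {lam : ℕ → ℝ} {r : E}
    (hlam : ∀ k, 0 ≤ lam k) (hlim : Tendsto (fun k => lam k • v k) atTop (𝓝 r)) (hr : r ≠ 0)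
    (hrv : ∀ i, ∀ t : ℝ, 0 < t → r ≠ t • v i) :
    ∃ φ : ℕ → ℕ, StrictMono φ ∧ ∀ i j, i ≠ j → ∀ t : ℝ, 0 < t → v (φ i) ≠ t • v (φ j) := by
  obtain ⟨φ, hφ, hlt⟩ :=
    Filter.extraction_forall_lt_of_eventually (eventually_forall_pos_smul_ne hlam hlim hr hrv)
  refine ⟨φ, hφ, fun i j hij t ht => ?_⟩
  rcases hij.lt_or_gt with h | h
  · intro he
    apply hlt i j h t⁻¹ (inv_pos.2 ht)
    rw [he, smul_smul, inv_mul_cancel₀ ht.ne', one_smul]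
  · exact hlt j i h t ht

theorem extreme_ray_characterization_general (n : ℕ) (Ω : Set ((Fin n → ℝ) × ℝ))
    (h0n : (0 : (Fin n → ℝ) × ℝ) ∉ Ω)
    (C : Set ((Fin n → ℝ) × ℝ)) (hC : C = closure (conicalHull Ω))
    (hpointed : C ∩ (-C) = {0})
    (r : (Fin n → ℝ) × ℝ) (hr : r ≠ 0) (hrC : r ∈ C)
    (hext : ∀ a ∈ C, ∀ b ∈ C, r = a + b →
      (∃ s : ℝ, 0 ≤ s ∧ a = s • r) ∧ (∃ s : ℝ, 0 ≤ s ∧ b = s • r)) :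
    (∃ ω ∈ Ω, ∃ t : ℝ, 0 < t ∧ r = t • ω) ∨
    (∃ (rs : ℕ → (Fin n → ℝ) × ℝ) (lam : ℕ → ℝ),
      (∀ i, rs i ∈ Ω) ∧
      (∀ i j, i ≠ j → ∀ t : ℝ, 0 < t → rs i ≠ t • rs j) ∧
      (∀ i, 0 < lam i) ∧
      Filter.Tendsto (fun i => lam i • rs i) Filter.atTop (nhds r)) := by
  set K : ProperCone ℝ ((Fin n → ℝ) × ℝ) := Submodule.closure (PointedCone.hull ℝ Ω)
  have hKC : (K : Set ((Fin n → ℝ) × ℝ)) = C := by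
    rw [hC, ← PointedCone.coe_hull_eq_conicalHull]
    rfl
  have hray : IsExtremeRay (K : Set ((Fin n → ℝ) × ℝ)) r := hKC ▸ ⟨hrC, hr, hext⟩
  have hsal := (PointedCone.salient_iff_inter_neg_eq_singleton K.toPointedCone).2 (hKC ▸ hpointed)
  obtain ⟨v, lam, hvΩ, hlam, hlim⟩ := hray.exists_tendsto_smul hsal
    (PointedCone.subset_hull.trans subset_closure) h0n (hC ▸ hrC)
  by_cases hmul : ∃ ω ∈ Ω, ∃ t : ℝ, 0 < t ∧ r = t • ω
  · exact .inl hmul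
  push Not at hmul
  obtain ⟨φ, hφ, hpair⟩ := extraction_forall_ne_pos_smul_of_tendsto (fun k => (hlam k).le) hlim hr
    fun i => hmul _ (hvΩ i)
  exact .inr ⟨v ∘ φ, lam ∘ φ, fun i => hvΩ _, hpair, fun i => hlam _, hlim.comp hφ.tendsto_atTop⟩

/-- If `Ω ⊆ ℝ^{n+1}` contains `(0,…,0,1)`, does not contain `0`, and
`cl cone(Ω)` is pointed, then every extreme ray `r` of `cl cone(Ω)` is either a
positive multiple of an element of `Ω`, or the conical limit of a sequence of
pairwise non-proportional elements of `Ω`. -/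
theorem extreme_ray_characterization (n : ℕ) (Ω : Set ((Fin n → ℝ) × ℝ))
    (h0 : ((0 : Fin n → ℝ), (1 : ℝ)) ∈ Ω)
    (h0n : (0 : (Fin n → ℝ) × ℝ) ∉ Ω)
    (C : Set ((Fin n → ℝ) × ℝ)) (hC : C = closure (conicalHull Ω))
    (hpointed : C ∩ (-C) = {0})
    (r : (Fin n → ℝ) × ℝ) (hr : r ≠ 0) (hrC : r ∈ C)
    (hext : ∀ a ∈ C, ∀ b ∈ C, r = a + b →
      (∃ s : ℝ, 0 ≤ s ∧ a = s • r) ∧ (∃ s : ℝ, 0 ≤ s ∧ b = s • r)) :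
    (∃ ω ∈ Ω, ∃ t : ℝ, 0 < t ∧ r = t • ω) ∨
    (∃ (rs : ℕ → (Fin n → ℝ) × ℝ) (lam : ℕ → ℝ),
      (∀ i, rs i ∈ Ω) ∧
      (∀ i j, i ≠ j → ∀ t : ℝ, 0 < t → rs i ≠ t • rs j) ∧
      (∀ i, 0 < lam i) ∧
      Filter.Tendsto (fun i => lam i • rs i) Filter.atTop (nhds r)) :=
  extreme_ray_characterization_general n Ω h0n C hC hpointed r hr hrC hext
end

section
/- Let π ∈ ℝ^n and let I ⊆ {1,…,n} be such that {1} ∪ {π_i : i ∈ I} is a basis of the ℚ-span of {1, π_1, …, π_n}, with π_j = q_{j,0} + Σ_{i∈I} q_{j,i} π_i for rational q_{j,i} and all j ∉ I. Then V_π = {x ∈ ℝ^n : x_j = Σ_{i∈I} q_{j,i} x_i for all j ∉ I}. -/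
/-! Eliminating the dependent coordinates `j ∉ I` by means of the relations
`π_j = q_{j,0} + ∑ q_{j,i} π_i` turns a rational form `α · π` into
`(rational constant) + ∑_{i ∈ I} c_i π_i`, and the same substitution turns `α · x` into
`∑_{i ∈ I} c_i x_i` for `x` in the right-hand side. If `α · π ∈ ℚ`, independence of
`{1} ∪ {π_i}` forces every `c_i = 0`, so `α · x = 0`. Conversely, the form
`e_j - ∑_{i ∈ I} q_{j,i} e_i` takes the rational value `q_{j,0}` at `π`, so it vanishes on `V_π`. -/

open Finset

theorem sum_mul_eq_of_forall_notMem_eq {ι R : Type*} [Fintype ι] [DecidableEq ι] [CommRing R]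
    (I : Finset ι) (a b₀ y : ι → R) (b : ι → ι → R)
    (hy : ∀ j ∉ I, y j = b₀ j + ∑ i ∈ I, b j i * y i) :
    ∑ j, a j * y j
      = ∑ j ∈ Iᶜ, a j * b₀ j + ∑ i ∈ I, (a i + ∑ j ∈ Iᶜ, a j * b j i) * y i := by
  rw [← sum_add_sum_compl I,
    sum_congr rfl fun j hj => congrArg (a j * ·) (hy j (mem_compl.mp hj))]
  simp only [mul_add, add_mul, sum_add_distrib, mul_sum, sum_mul, mul_assoc]
  rw [sum_comm (s := Iᶜ)]
  ring

theorem sum_ratCast_single_sub_piecewise_mul {ι K : Type*} [Fintype ι] [DecidableEq ι]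
    [DivisionRing K] [CharZero K] (I : Finset ι) (j : ι) (c : ι → ℚ) (g : ι → K) :
    ∑ k, ((Pi.single j 1 - I.piecewise c 0 : ι → ℚ) k : K) * g k
      = g j - ∑ i ∈ I, (c i : K) * g i := by
  simp only [Pi.sub_apply, piecewise, Pi.zero_apply, Rat.cast_sub, sub_mul, sum_sub_distrib,
    Pi.single_apply, apply_ite (fun t : ℚ => (t : K)), Rat.cast_one, Rat.cast_zero, ite_mul,
    one_mul, zero_mul, sum_ite_eq', mem_univ, if_true, sum_ite_mem, univ_inter]

/-- If `{1} ∪ {π_i : i ∈ I}` is a ℚ-basis of the ℚ-span of `{1, π_1, …, π_n}`,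
with `π_j = q_{j,0} + ∑_{i∈I} q_{j,i} π_i` for `j ∉ I`, then
`V_π = {x : x_j = ∑_{i∈I} q_{j,i} x_i for all j ∉ I}`. -/
theorem V_pi_basis_characterization (n : ℕ) (π : Fin n → ℝ) (I : Finset (Fin n))
    (q0 : Fin n → ℚ) (q : Fin n → Fin n → ℚ)
    (hindep : ∀ (c0 : ℚ) (c : Fin n → ℚ),
      ((c0 : ℝ) + ∑ i ∈ I, (c i : ℝ) * π i = 0) → c0 = 0 ∧ ∀ i ∈ I, c i = 0)
    (hrep : ∀ j ∉ I, π j = (q0 j : ℝ) + ∑ i ∈ I, (q j i : ℝ) * π i) :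
    {x : Fin n → ℝ | ∀ α : Fin n → ℚ,
        (∃ p : ℚ, ∑ j, (α j : ℝ) * π j = (p : ℝ)) →
        ∑ j, (α j : ℝ) * x j = 0}
      = {x : Fin n → ℝ | ∀ j ∉ I, x j = ∑ i ∈ I, (q j i : ℝ) * x i} := by
  ext x
  constructor
  · intro hx j hj
    have hform (g : Fin n → ℝ) := sum_ratCast_single_sub_piecewise_mul I j (q j) g
    have h := hx _ ⟨q0 j, by rw [hform, hrep j hj]; ring⟩
    rw [hform] at h
    exact sub_eq_zero.mp h
  · rintro hx α ⟨p, hp⟩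
    set c : Fin n → ℚ := fun i => α i + ∑ j ∈ Iᶜ, α j * q j i
    have hπ := sum_mul_eq_of_forall_notMem_eq I (fun j => (α j : ℝ))
      (fun j => (q0 j : ℝ)) π (fun j i => (q j i : ℝ)) hrep
    have hc : ∀ i ∈ I, c i = 0 :=
      (hindep (∑ j ∈ Iᶜ, α j * q0 j - p) c (by push_cast [c]; linarith)).2
    calc ∑ j, (α j : ℝ) * x j = ∑ i ∈ I, (c i : ℝ) * x i := by
          rw [sum_mul_eq_of_forall_notMem_eq I (fun j => (α j : ℝ)) 0 x
            (fun j i => (q j i : ℝ)) (by simpa using hx)]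
          simp [c]
      _ = 0 := sum_eq_zero fun i hi => by rw [hc i hi, Rat.cast_zero, zero_mul]
end

section
/- Sticky face lemma: let P be a polyhedron in ℝ^n, c_0 ∈ ℝ^n, and let F be the set of maximizers of x ↦ c_0·x over P (assumed nonempty). Then there exists ε > 0 such that for every c with ‖c − c_0‖ < ε, the set of maximizers of x ↦ c·x over P equals the set of maximizers of x ↦ c·x over F. -/
/-!
At a point `x ∈ P` with active constraints `J`, `x` maximizes `c` on `P` iff `c ≤ 0` on the cone
`K_J = {v | ⟪A i, v⟫ ≤ 0 for i ∈ J}`, and for `x ∈ F`, `x` maximizes `c` on `F` iff `c ≤ 0` on the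
face `K_J ∩ c₀ᗮ`. As there are finitely many `J`, it suffices to show for a single polyhedral cone
`K` that, for `c` near `c₀`, `c ≤ 0` on `K` iff `c₀ ≤ 0` on `K` and `c ≤ 0` on `K ∩ c₀ᗮ`.
That `c₀ ≤ 0` fails somewhere on `K` is an open condition on `c₀`. Conversely, when `c₀ ≤ 0` on `K`,
a Hoffman-type bound puts every `v ∈ K` within `L * -⟪c₀, v⟫` of some `w ∈ K ∩ c₀ᗮ`, whence
`⟪c, v⟫ ≤ ⟪c, w⟫ + (1 - L‖c - c₀‖) ⟪c₀, v⟫ ≤ 0`. The bound is proved by induction on the number of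
constraints: unit counterexamples orthogonal to the lineality space of `K` accumulate at a point
`v₀` of the face, and near `v₀` the cone `K` is `v₀` plus the cone of the constraints active at
`v₀`, which are strictly fewer.
-/

open scoped RealInnerProductSpace
open Filter Topology

section Polyhedron

variable {E ι : Type*} [NormedAddCommGroup E] [InnerProductSpace ℝ E]

def polyhedron (a : ι → E) (b : ι → ℝ) (s : Finset ι) : Set E :=
  {x | ∀ i ∈ s, ⟪a i, x⟫ ≤ b i}

noncomputable def activeSet (a : ι → E) (b : ι → ℝ) (s : Finset ι) (x : E) : Finset ι :=
  s.filter fun i => ⟪a i, x⟫ = b i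

def maximizers (c : E) (S : Set E) : Set E :=
  {x ∈ S | ∀ y ∈ S, ⟪c, y⟫ ≤ ⟪c, x⟫}

variable {a : ι → E} {b : ι → ℝ} {s : Finset ι} {x : E}

lemma smul_mem_polyhedron_zero {v : E} (hv : v ∈ polyhedron a 0 s) {r : ℝ} (hr : 0 ≤ r) :
    r • v ∈ polyhedron a 0 s := fun i hi => by
  simpa [real_inner_smul_right] using mul_nonpos_of_nonneg_of_nonpos hr (hv i hi)

lemma isClosed_polyhedron : IsClosed (polyhedron a b s) := by
  simp only [polyhedron, Set.ofPred_forall]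
  exact isClosed_biInter fun i _ => isClosed_le (continuous_const.inner continuous_id)
    continuous_const

lemma sub_mem_polyhedron_activeSet {y : E} (hy : y ∈ polyhedron a b s) :
    y - x ∈ polyhedron a 0 (activeSet a b s x) := fun i hi => by
  obtain ⟨his, hix⟩ := Finset.mem_filter.1 hi
  simpa [inner_sub_right, hix] using hy i his

lemma eventually_mem_polyhedron (hx : x ∈ polyhedron a b s) :
    ∀ᶠ y in 𝓝 x, y - x ∈ polyhedron a 0 (activeSet a b s x) → y ∈ polyhedron a b s := by
  have hstrict : ∀ᶠ y in 𝓝 x, ∀ i ∈ s, ⟪a i, x⟫ < b i → ⟪a i, y⟫ < b i :=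
    (eventually_all_finset s).2 fun i _ => by
      by_cases h : ⟪a i, x⟫ < b i
      · exact ((continuous_const.inner continuous_id).continuousAt.eventually_lt
          continuousAt_const h).mono fun y hy _ => hy
      · exact Eventually.of_forall fun y h' => absurd h' h
  filter_upwards [hstrict] with y hy hyx i hi
  rcases (hx i hi).lt_or_eq with hlt | heq
  · exact (hy i hi hlt).le
  · have := hyx i (Finset.mem_filter.2 ⟨hi, heq⟩)
    simp only [inner_sub_right, Pi.zero_apply, sub_nonpos] at this
    linarith

lemma exists_pos_add_smul_mem_polyhedron (hx : x ∈ polyhedron a b s) {u : E}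
    (hu : u ∈ polyhedron a 0 (activeSet a b s x)) :
    ∃ t : ℝ, 0 < t ∧ x + t • u ∈ polyhedron a b s := by
  have hlim : Tendsto (fun t : ℝ => x + t • u) (𝓝[>] 0) (𝓝 x) := by
    have : Continuous fun t : ℝ => x + t • u := by fun_prop
    simpa using (this.tendsto 0).mono_left nhdsWithin_le_nhds
  obtain ⟨t, hxt, ht⟩ := ((hlim.eventually (eventually_mem_polyhedron hx)).and
    self_mem_nhdsWithin).exists
  exact ⟨t, ht, hxt (by simpa using smul_mem_polyhedron_zero hu ht.le)⟩

lemma mem_maximizers_polyhedron_iff (hx : x ∈ polyhedron a b s) {c : E} :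
    x ∈ maximizers c (polyhedron a b s) ↔
      ∀ u ∈ polyhedron a 0 (activeSet a b s x), ⟪c, u⟫ ≤ 0 := by
  refine ⟨fun hmax u hu => ?_, fun h => ⟨hx, fun y hy => ?_⟩⟩
  · obtain ⟨t, ht, hxt⟩ := exists_pos_add_smul_mem_polyhedron hx hu
    have := hmax.2 _ hxt
    rw [inner_add_right, real_inner_smul_right] at this
    nlinarith
  · simpa [inner_sub_right] using h _ (sub_mem_polyhedron_activeSet hy)

lemma mem_maximizers_maximizers_iff {c₀ c : E} (hx : x ∈ maximizers c₀ (polyhedron a b s)) :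
    x ∈ maximizers c (maximizers c₀ (polyhedron a b s)) ↔
      ∀ u ∈ polyhedron a 0 (activeSet a b s x), ⟪c₀, u⟫ = 0 → ⟪c, u⟫ ≤ 0 := by
  refine ⟨fun hmax u hu hu₀ => ?_, fun h => ⟨hx, fun y hy => ?_⟩⟩
  · obtain ⟨t, ht, hxt⟩ := exists_pos_add_smul_mem_polyhedron hx.1 hu
    have hxtF : x + t • u ∈ maximizers c₀ (polyhedron a b s) :=
      ⟨hxt, fun z hz => by simpa [inner_add_right, real_inner_smul_right, hu₀] using hx.2 z hz⟩
    have := hmax.2 _ hxtF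
    rw [inner_add_right, real_inner_smul_right] at this
    nlinarith
  · have hyx : ⟪c₀, y - x⟫ = 0 := by
      rw [inner_sub_right]; linarith [hx.2 y hy.1, hy.2 x hx.1]
    simpa [inner_sub_right] using h _ (sub_mem_polyhedron_activeSet hy.1) hyx

end Polyhedron

section Cone

variable {E ι : Type*} [NormedAddCommGroup E] [InnerProductSpace ℝ E]
  {a : ι → E} {s : Finset ι} {c₀ : E}

def NearFace (a : ι → E) (s : Finset ι) (c₀ : E) (L : ℝ) (v : E) : Prop :=
  ∃ w ∈ polyhedron a 0 s, ⟪c₀, w⟫ = 0 ∧ ‖v - w‖ ≤ L * -⟪c₀, v⟫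

noncomputable def lineality (a : ι → E) (s : Finset ι) (c₀ : E) : Submodule ℝ E :=
  LinearMap.ker (innerₛₗ ℝ c₀) ⊓ ⨅ i ∈ s, LinearMap.ker (innerₛₗ ℝ (a i))

lemma mem_lineality {z : E} :
    z ∈ lineality a s c₀ ↔ ⟪c₀, z⟫ = 0 ∧ ∀ i ∈ s, ⟪a i, z⟫ = 0 := by
  simp [lineality]

lemma NearFace.mono {L L' : ℝ} {v : E} (h : NearFace a s c₀ L v) (hL : L ≤ L')
    (hv : 0 ≤ -⟪c₀, v⟫) : NearFace a s c₀ L' v :=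
  let ⟨w, hw, hw₀, hvw⟩ := h
  ⟨w, hw, hw₀, hvw.trans (mul_le_mul_of_nonneg_right hL hv)⟩

lemma NearFace.smul {L r : ℝ} {v : E} (h : NearFace a s c₀ L v) (hr : 0 ≤ r) :
    NearFace a s c₀ L (r • v) := by
  obtain ⟨w, hw, hw₀, hvw⟩ := h
  refine ⟨r • w, smul_mem_polyhedron_zero hw hr, by simp [real_inner_smul_right, hw₀], ?_⟩
  rw [← smul_sub, norm_smul, Real.norm_of_nonneg hr, real_inner_smul_right]
  nlinarith

lemma NearFace.add_lineality {L : ℝ} {v z : E} (h : NearFace a s c₀ L v)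
    (hz : z ∈ lineality a s c₀) : NearFace a s c₀ L (v + z) := by
  obtain ⟨w, hw, hw₀, hvw⟩ := h
  obtain ⟨hz₀, hzs⟩ := mem_lineality.1 hz
  refine ⟨w + z, fun i hi => ?_, by simp [inner_add_right, hw₀, hz₀], ?_⟩
  · simpa [inner_add_right, hzs i hi] using hw i hi
  · simpa [inner_add_right, hz₀, add_sub_add_right_eq_sub] using hvw

lemma eventually_nearFace {v : E} (hv : v ∈ polyhedron a 0 s) (hv₀ : ⟪c₀, v⟫ = 0)
    (h : ∀ u ∈ polyhedron a 0 s, ⟪c₀, u⟫ ≤ 0)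
    (ih : (∀ u ∈ polyhedron a 0 (activeSet a 0 s v), ⟪c₀, u⟫ ≤ 0) →
      ∃ L, ∀ u ∈ polyhedron a 0 (activeSet a 0 s v), NearFace a (activeSet a 0 s v) c₀ L u) :
    ∃ L, ∀ᶠ y in 𝓝 v, y ∈ polyhedron a 0 s → NearFace a s c₀ L y := by
  have hvmax : v ∈ maximizers c₀ (polyhedron a 0 s) := ⟨hv, fun y hy => hv₀ ▸ h y hy⟩
  obtain ⟨L, hL⟩ := ih ((mem_maximizers_polyhedron_iff hv).1 hvmax)
  obtain ⟨ρ, hρ, hball⟩ := Metric.eventually_nhds_iff.1 (eventually_mem_polyhedron hv)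
  have hsmall : ∀ᶠ y in 𝓝 v, ‖y - v‖ + L * -⟪c₀, y⟫ < ρ := by
    have : Continuous fun y => ‖y - v‖ + L * -⟪c₀, y⟫ := by fun_prop
    exact this.continuousAt.eventually_lt continuousAt_const (by simpa [hv₀] using hρ)
  refine ⟨L, hsmall.mono fun y hy hyK => ?_⟩
  obtain ⟨w, hwJ, hw₀, hyw⟩ := hL _ (sub_mem_polyhedron_activeSet hyK)
  rw [inner_sub_right, hv₀, sub_zero] at hyw
  have hw : ‖w‖ < ρ := calc
    ‖w‖ ≤ ‖y - v‖ + ‖y - v - w‖ := by simpa using norm_sub_le (y - v) (y - v - w)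
    _ < ρ := by linarith
  refine ⟨v + w, hball (by simpa using hw) (by simpa using hwJ), ?_, by rwa [sub_add_eq_sub_sub]⟩
  simp [inner_add_right, hv₀, hw₀]

variable [FiniteDimensional ℝ E]

lemma exists_unit_not_nearFace {L : ℝ}
    (h : ∃ v ∈ polyhedron a 0 s, ¬ NearFace a s c₀ L v) :
    ∃ v ∈ polyhedron a 0 s, v ∈ (lineality a s c₀)ᗮ ∧ ‖v‖ = 1 ∧
      ¬ NearFace a s c₀ L v := by
  obtain ⟨v, hv, hbad⟩ := h
  obtain ⟨z, hz, q, hq, rfl⟩ := (lineality a s c₀).exists_add_mem_mem_orthogonal v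
  have hqK : q ∈ polyhedron a 0 s := fun i hi => by
    simpa [inner_add_right, (mem_lineality.1 hz).2 i hi] using hv i hi
  have hqbad : ¬ NearFace a s c₀ L q := fun hq' =>
    hbad (by simpa [add_comm] using hq'.add_lineality hz)
  have hq0 : q ≠ 0 := by
    rintro rfl
    exact hqbad ⟨0, fun i _ => by simp, by simp, by simp⟩
  refine ⟨‖q‖⁻¹ • q, smul_mem_polyhedron_zero hqK (by positivity),
    Submodule.smul_mem _ _ hq, norm_smul_inv_norm hq0, fun hu => hqbad ?_⟩
  simpa [smul_smul, hq0] using hu.smul (norm_nonneg q)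

theorem exists_nearFace (h : ∀ v ∈ polyhedron a 0 s, ⟪c₀, v⟫ ≤ 0) :
    ∃ L, ∀ v ∈ polyhedron a 0 s, NearFace a s c₀ L v := by
  induction s using Finset.strongInduction with
  | H s ih =>
  by_contra! hbad
  choose v hvK hvlin hvnorm hvbad using
    fun j : ℕ => exists_unit_not_nearFace (hbad (j + 1))
  obtain ⟨v₀, hv₀norm, φ, hφ, hlim⟩ := (isCompact_sphere (0 : E) 1).tendsto_subseq
    fun j => mem_sphere_zero_iff_norm.2 (hvnorm j)
  have hv₀K : v₀ ∈ polyhedron a 0 s :=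
    isClosed_polyhedron.mem_of_tendsto hlim (Eventually.of_forall fun j => hvK _)
  have hv₀lin : v₀ ∈ (lineality a s c₀)ᗮ :=
    (Submodule.isClosed_orthogonal _).mem_of_tendsto hlim (Eventually.of_forall fun j => hvlin _)
  have hv₀ : ⟪c₀, v₀⟫ = 0 := by
    have hsmall : ∀ j, -⟪c₀, v j⟫ ≤ 1 / ((j : ℝ) + 1) := fun j => by
      have := hvbad j
      simp only [NearFace, not_exists, not_and, not_le] at this
      rw [le_div_iff₀ (by positivity)]
      simpa [mul_comm, hvnorm j] using (this 0 (fun i _ => by simp) (by simp)).le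
    have hcont : Continuous fun y : E => -⟪c₀, y⟫ := by fun_prop
    have := le_of_tendsto_of_tendsto' ((hcont.tendsto v₀).comp hlim)
      (tendsto_one_div_add_atTop_nhds_zero_nat.comp hφ.tendsto_atTop) fun j => hsmall (φ j)
    linarith [h v₀ hv₀K]
  have hJ : activeSet a 0 s v₀ ⊂ s := by
    refine (Finset.filter_subset _ _).ssubset_of_ne fun hJs => ?_
    have hv₀lin' : v₀ ∈ lineality a s c₀ := mem_lineality.2 ⟨hv₀, fun i hi => by
      rw [← hJs] at hi; exact (Finset.mem_filter.1 hi).2⟩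
    have := Submodule.inner_right_of_mem_orthogonal hv₀lin' hv₀lin
    rw [real_inner_self_eq_norm_sq, mem_sphere_zero_iff_norm.1 hv₀norm] at this
    norm_num at this
  obtain ⟨L, hL⟩ := eventually_nearFace hv₀K hv₀ h (ih _ hJ)
  obtain ⟨j, hjL, hjnear⟩ := ((tendsto_natCast_atTop_atTop.comp hφ.tendsto_atTop)
    |>.eventually_ge_atTop L |>.and (hlim.eventually hL)).exists
  simp only [Function.comp_apply] at hjL hjnear
  exact hvbad (φ j) ((hjnear (hvK _)).mono (by linarith) (by linarith [h _ (hvK (φ j))]))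

end Cone

section Perturbation

variable {E ι : Type*} [NormedAddCommGroup E] [InnerProductSpace ℝ E]

lemma eventually_nonpos_imp_nonpos (c₀ : E) (S : Set E) :
    ∀ᶠ c in 𝓝 c₀, (∀ v ∈ S, ⟪c, v⟫ ≤ 0) → ∀ v ∈ S, ⟪c₀, v⟫ ≤ 0 := by
  by_cases h : ∀ v ∈ S, ⟪c₀, v⟫ ≤ 0
  · exact Eventually.of_forall fun _ _ => h
  · simp only [not_forall, not_le] at h
    obtain ⟨v, hv, hpos⟩ := h
    have hcont : Continuous fun c : E => ⟪c, v⟫ := by fun_prop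
    exact (hcont.continuousAt.eventually (lt_mem_nhds hpos)).mono
      fun c hc hcS => absurd (hcS v hv) (not_le.2 hc)

variable [FiniteDimensional ℝ E]

lemma eventually_nonpos_of_nonpos_on_face (a : ι → E) (s : Finset ι) {c₀ : E}
    (h : ∀ v ∈ polyhedron a 0 s, ⟪c₀, v⟫ ≤ 0) :
    ∀ᶠ c in 𝓝 c₀, (∀ w ∈ polyhedron a 0 s, ⟪c₀, w⟫ = 0 → ⟪c, w⟫ ≤ 0) →
      ∀ v ∈ polyhedron a 0 s, ⟪c, v⟫ ≤ 0 := by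
  obtain ⟨L, hL⟩ := exists_nearFace h
  have hclose : ∀ᶠ c in 𝓝 c₀, ‖c - c₀‖ * L < 1 := by
    have : Continuous fun c : E => ‖c - c₀‖ * L := by fun_prop
    exact this.continuousAt.eventually_lt continuousAt_const (by simp)
  filter_upwards [hclose] with c hc hface v hv
  obtain ⟨w, hw, hw₀, hvw⟩ := hL v hv
  have hv₀ : 0 ≤ -⟪c₀, v⟫ := neg_nonneg.2 (h v hv)
  calc ⟪c, v⟫ = ⟪c, w⟫ + ⟪c₀, v⟫ + ⟪c - c₀, v - w⟫ := by
        simp only [inner_sub_left, inner_sub_right, hw₀]; ring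
    _ ≤ 0 + ⟪c₀, v⟫ + ‖c - c₀‖ * (L * -⟪c₀, v⟫) := by
        gcongr
        · exact hface w hw hw₀
        · exact (real_inner_le_norm _ _).trans (mul_le_mul_of_nonneg_left hvw (norm_nonneg _))
    _ ≤ 0 := by nlinarith

theorem eventually_nonpos_on_polyhedron_zero_iff (a : ι → E) (c₀ : E) (s : Finset ι) :
    ∀ᶠ c in 𝓝 c₀, (∀ v ∈ polyhedron a 0 s, ⟪c, v⟫ ≤ 0) ↔
      (∀ v ∈ polyhedron a 0 s, ⟪c₀, v⟫ ≤ 0) ∧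
        ∀ w ∈ polyhedron a 0 s, ⟪c₀, w⟫ = 0 → ⟪c, w⟫ ≤ 0 := by
  by_cases h : ∀ v ∈ polyhedron a 0 s, ⟪c₀, v⟫ ≤ 0
  · filter_upwards [eventually_nonpos_of_nonpos_on_face a s h] with c hc
    exact ⟨fun hc' => ⟨h, fun w hw _ => hc' w hw⟩, fun hc' => hc hc'.2⟩
  · filter_upwards [eventually_nonpos_imp_nonpos c₀ (polyhedron a 0 s)] with c hc
    exact iff_of_false (fun hc' => h (hc hc')) fun hc' => h hc'.1

end Perturbation

theorem sticky_face_general (n m : ℕ) (A : Fin m → EuclideanSpace ℝ (Fin n))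
    (b : Fin m → ℝ) (P : Set (EuclideanSpace ℝ (Fin n)))
    (hP : P = {x | ∀ i, ⟪A i, x⟫ ≤ b i})
    (c0 : EuclideanSpace ℝ (Fin n)) (F : Set (EuclideanSpace ℝ (Fin n)))
    (hF : F = {x ∈ P | ∀ y ∈ P, ⟪c0, y⟫ ≤ ⟪c0, x⟫}) :
    ∃ ε > (0 : ℝ), ∀ c : EuclideanSpace ℝ (Fin n), ‖c - c0‖ < ε →
      {x ∈ P | ∀ y ∈ P, ⟪c, y⟫ ≤ ⟪c, x⟫}
        = {x ∈ F | ∀ y ∈ F, ⟪c, y⟫ ≤ ⟪c, x⟫} := by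
  have hPA : P = polyhedron A b Finset.univ := by simp [hP, polyhedron]
  obtain ⟨ε, hε, hnear⟩ := Metric.eventually_nhds_iff.1
    (eventually_all.2 fun J => eventually_nonpos_on_polyhedron_zero_iff A c0 J)
  refine ⟨ε, hε, fun c hc => Set.ext fun x => ?_⟩
  subst hF
  rw [hPA]
  change x ∈ maximizers c _ ↔ x ∈ maximizers c (maximizers c0 _)
  by_cases hx : x ∈ polyhedron A b Finset.univ
  · rw [mem_maximizers_polyhedron_iff hx, hnear (by rwa [dist_eq_norm]),
      ← mem_maximizers_polyhedron_iff hx]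
    exact ⟨fun hc' => (mem_maximizers_maximizers_iff hc'.1).2 hc'.2,
      fun hc' => ⟨hc'.1, (mem_maximizers_maximizers_iff hc'.1).1 hc'⟩⟩
  · exact iff_of_false (fun h => hx h.1) fun h => hx h.1.1

/-- Sticky face lemma: if `F` is the (nonempty) set of maximizers of `c₀·x` on
a polyhedron `P`, then for all `c` close enough to `c₀`, the maximizers of
`c·x` on `P` are exactly the maximizers of `c·x` on `F`. -/
theorem sticky_face (n m : ℕ) (A : Fin m → EuclideanSpace ℝ (Fin n))
    (b : Fin m → ℝ) (P : Set (EuclideanSpace ℝ (Fin n)))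
    (hP : P = {x | ∀ i, ⟪A i, x⟫ ≤ b i})
    (c0 : EuclideanSpace ℝ (Fin n)) (F : Set (EuclideanSpace ℝ (Fin n)))
    (hF : F = {x ∈ P | ∀ y ∈ P, ⟪c0, y⟫ ≤ ⟪c0, x⟫})
    (hFne : F.Nonempty) :
    ∃ ε > (0 : ℝ), ∀ c : EuclideanSpace ℝ (Fin n), ‖c - c0‖ < ε →
      {x ∈ P | ∀ y ∈ P, ⟪c, y⟫ ≤ ⟪c, x⟫}
        = {x ∈ F | ∀ y ∈ F, ⟪c, y⟫ ≤ ⟪c, x⟫} :=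
  sticky_face_general n m A b P hP c0 F hF
end
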